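/- arXiv:2506.09017 — 3 statements merged into one kernel-verified Lean document; each statement's English description precedes it below -/
import Mathlib

section
/- Let p be a prime, n, m ≥ 1, and GR(p^n,m) = (ZMod (p^n))[X]/(f) for a monic basic irreducible f of degree m. Then there exists a unit γ of GR(p^n,m) whose multiplicative order is exactly p^m − 1 and whose image in the residue field GR(p^n,m)/(p) generates the multiplicative group of units of that residue field. -/
/-!
Reduction mod `p` identifies `GR(p^n, m) ⧸ (p)` with `𝔽_p[X] ⧸ (f̄)`, a field with `p^m`
elements, whose unit group is cyclic of order `q = p^m - 1`. Since `(p)` is nilpotent, a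
generator `g` lifts to a unit `u`, and every unit `≡ 1 mod p` satisfies `x^(p^(n-1)) = 1`.
So `γ = u^(p^(n-1))` has `γ^q = 1`, while its image `g^(p^(n-1))` has order `q` and still
generates because `q` is prime to `p`.
-/

open Polynomial

theorem MonoidHom.exists_orderOf_eq_and_mem_zpowers_map {G H : Type*} [Group G] [Group H]
    (π : G →* H) (hπ : Function.Surjective π) {N : ℕ} (hker : ∀ x ∈ π.ker, x ^ N = 1)
    (g : H) (hg : (orderOf g).Coprime N) :
    ∃ γ : G, orderOf γ = orderOf g ∧ g ∈ Subgroup.zpowers (π γ) := by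
  obtain ⟨u, rfl⟩ := hπ g
  have hγ : π (u ^ N) = π u ^ N := map_pow π u N
  have hpow : (u ^ N) ^ orderOf (π u) = 1 := by
    rw [← pow_mul, mul_comm, pow_mul]
    exact hker _ (by rw [MonoidHom.mem_ker, map_pow, pow_orderOf_eq_one])
  refine ⟨u ^ N, ?_, ?_⟩
  · apply Nat.dvd_antisymm (orderOf_dvd_of_pow_eq_one hpow)
    simpa only [hγ, hg.orderOf_pow] using orderOf_map_dvd π (u ^ N)
  · rw [hγ, mem_zpowers_pow_iff, Nat.gcd_comm, hg]

theorem Units.pow_pow_eq_one_of_mem_ker_unitsMap {A : Type*} [CommRing A] {p k : ℕ}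
    (hp : (p : A) ^ (k + 1) = 0) {x : Aˣ}
    (hx : x ∈ (Units.map (Ideal.Quotient.mk (Ideal.span {(p : A)})).toMonoidHom).ker) :
    x ^ p ^ k = 1 := by
  have hdvd : (p : A) ∣ (x : A) - 1 := by
    rw [← Ideal.mem_span_singleton, ← Ideal.Quotient.eq]
    simpa [Units.ext_iff] using hx
  have h := dvd_sub_pow_of_dvd_sub hdvd k
  rw [hp, one_pow, zero_dvd_iff, sub_eq_zero] at h
  exact Units.ext (by simpa using h)

theorem IsNilpotent.surjective_unitsMap_quotient_mk {R : Type*} [CommRing R] {I : Ideal R}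
    (hI : IsNilpotent I) : Function.Surjective (Units.map (Ideal.Quotient.mk I).toMonoidHom) := by
  intro v
  obtain ⟨a, ha⟩ := Ideal.Quotient.mk_surjective (v : R ⧸ I)
  have hunit : IsUnit a := hI.isUnit_quotient_mk_iff.mp (ha ▸ v.isUnit)
  exact ⟨hunit.unit, Units.ext ha⟩

theorem ZMod.ker_castHom {m d : ℕ} (h : d ∣ m) :
    RingHom.ker (ZMod.castHom h (ZMod d)) = Ideal.span {(d : ZMod m)} := by
  ext x
  obtain ⟨k, rfl⟩ := ZMod.intCast_surjective x
  rw [RingHom.mem_ker, map_intCast, ZMod.intCast_zmod_eq_zero_iff_dvd, Ideal.mem_span_singleton]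
  constructor
  · rintro ⟨t, rfl⟩
    exact ⟨t, by push_cast; ring⟩
  · rintro ⟨y, hy⟩
    have := congrArg (ZMod.castHom h (ZMod d)) hy
    rwa [map_intCast, map_mul, map_natCast, ZMod.natCast_self, zero_mul,
      ZMod.intCast_zmod_eq_zero_iff_dvd] at this

noncomputable def AdjoinRoot.quotientMapKerEquiv {R S : Type*} [CommRing R] [CommRing S]
    (c : R →+* S) (hc : Function.Surjective c) (f : R[X]) :
    AdjoinRoot f ⧸ (RingHom.ker c).map (AdjoinRoot.of f) ≃+* AdjoinRoot (f.map c) :=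
  (AdjoinRoot.quotAdjoinRootEquivQuotPolynomialQuot (RingHom.ker c) f).trans
    (AdjoinRoot.mapRingEquiv (RingHom.quotientKerEquivOfSurjective hc) _ _ (by
      rw [Polynomial.map_map]; rfl))

noncomputable def AdjoinRoot.quotientSpanNatCastEquiv {p n : ℕ} (hn : n ≠ 0)
    (f : (ZMod (p ^ n))[X]) :
    AdjoinRoot f ⧸ Ideal.span {(p : AdjoinRoot f)} ≃+*
      AdjoinRoot (f.map (ZMod.castHom (dvd_pow_self p hn) (ZMod p))) :=
  (Ideal.quotEquivOfEq (by rw [ZMod.ker_castHom, Ideal.map_span, Set.image_singleton,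
    map_natCast])).trans (AdjoinRoot.quotientMapKerEquiv _ (ZMod.ringHom_surjective _) f)

theorem AdjoinRoot.natCard_of_monic {R : Type*} [CommRing R] {f : R[X]} (hf : f.Monic) :
    Nat.card (AdjoinRoot f) = Nat.card R ^ f.natDegree := by
  rw [Nat.card_congr (AdjoinRoot.powerBasis' hf).basis.equivFun.toEquiv, Nat.card_fun,
    Nat.card_fin, AdjoinRoot.powerBasis'_dim]

theorem RingEquiv.exists_generator_units_of_adjoinRoot {R K : Type*} [CommRing R] [Field K]
    [Finite K] {g : K[X]} [Fact (Irreducible g)] (hg : g.Monic) (e : R ≃+* AdjoinRoot g) :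
    ∃ x : Rˣ, orderOf x = Nat.card K ^ g.natDegree - 1 ∧ ∀ y, y ∈ Subgroup.zpowers x := by
  let eu : Rˣ ≃* (AdjoinRoot g)ˣ := Units.mapEquiv e.toMulEquiv
  have := hg.finite_adjoinRoot
  have := Module.finite_of_finite K (M := AdjoinRoot g)
  have : IsCyclic Rˣ := isCyclic_of_surjective eu.symm.toMonoidHom eu.symm.surjective
  obtain ⟨x, hx⟩ := IsCyclic.exists_generator (α := Rˣ)
  refine ⟨x, ?_, hx⟩
  rw [orderOf_eq_card_of_forall_mem_zpowers hx, Nat.card_congr eu.toEquiv, Nat.card_units,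
    AdjoinRoot.natCard_of_monic hg]

/-- The Galois ring `GR(p^n, m)` contains a unit `γ` of multiplicative order
exactly `p ^ m - 1` whose image in the residue field `GR(p^n,m)/(p)` generates the
multiplicative group of units of the residue field. -/
theorem galois_ring_exists_teichmuller_generator (p n m : ℕ) (hp : p.Prime)
    (hn : 0 < n) (hm : 0 < m)
    (f : Polynomial (ZMod (p ^ n))) (hf : f.Monic) (hdeg : f.natDegree = m)
    (hirr : Irreducible (f.map (ZMod.castHom (dvd_pow_self p hn.ne') (ZMod p)))) :
    ∃ γ : (AdjoinRoot f)ˣ, orderOf γ = p ^ m - 1 ∧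
      ∀ u : (AdjoinRoot f ⧸ Ideal.span {(p : AdjoinRoot f)})ˣ,
        u ∈ Subgroup.zpowers
          (Units.map (Ideal.Quotient.mk (Ideal.span {(p : AdjoinRoot f)})).toMonoidHom γ) := by
  have := Fact.mk hp
  have := Fact.mk hirr
  obtain ⟨g, hord, hg⟩ := (AdjoinRoot.quotientSpanNatCastEquiv hn.ne' f
    ).exists_generator_units_of_adjoinRoot (hf.map _)
  rw [hf.natDegree_map, hdeg, Nat.card_zmod] at hord
  obtain ⟨k, rfl⟩ := Nat.exists_eq_add_one_of_ne_zero hn.ne'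
  have hpk : (p : AdjoinRoot f) ^ (k + 1) = 0 := by
    rw [← Nat.cast_pow, ← map_natCast (AdjoinRoot.of f), ZMod.natCast_self, map_zero]
  have hnil : IsNilpotent (Ideal.span {(p : AdjoinRoot f)}) :=
    ⟨k + 1, by rw [Ideal.span_singleton_pow, hpk, Ideal.span_singleton_zero]; rfl⟩
  have hcop : (p ^ m - 1).Coprime (p ^ k) :=
    ((Nat.coprime_self_sub_left (Nat.one_le_pow m p hp.pos)).mpr (Nat.coprime_one_left _)
      |>.coprime_dvd_right (dvd_pow_self p hm.ne')).pow_right k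
  obtain ⟨γ, hγ, hgγ⟩ := MonoidHom.exists_orderOf_eq_and_mem_zpowers_map _
    hnil.surjective_unitsMap_quotient_mk
    (fun _ hx => Units.pow_pow_eq_one_of_mem_ker_unitsMap hpk hx) g (hord ▸ hcop)
  exact ⟨γ, hγ.trans hord, fun u => Subgroup.zpowers_le.mpr hgγ (hg u)⟩
end

section
/- Let p be a prime, n, m ≥ 1, and S = GR(p^n,m) = (ZMod (p^n))[X]/(f) for a monic basic irreducible f of degree m. Let α_1, …, α_N ∈ S with α_i − α_j a unit for all i ≠ j, let v_1, …, v_N be units of S, and let 1 ≤ k < N. Define units v'_i := v_i⁻¹ · ∏_{j ≠ i} (α_i − α_j)⁻¹. Then the dual code of GRS_v(N,k) with respect to the standard Euclidean inner product on S^N equals GRS_{v'}(N, N−k), the generalized Reed–Solomon code with the same evaluation points and multipliers v'. -/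
/-! The weights `w i = ∏_{j ≠ i} (α i - α j)⁻¹` satisfy `∑ i, w i * u (α i) = coeff u (N - 1)`
for every `u` of degree `< N`: this is Lagrange interpolation, which works over any commutative
ring once the differences of the nodes are units. Hence pairing `v' g(α)` with `v q(α)` gives the
coefficient of degree `N - 1` of `g q`, which vanishes when `deg g < N - k` and `deg q < k`.
Conversely, every vector is `v' h(α)` for an interpolating `h` of degree `< N`, and orthogonality
to the codewords `v α^t`, `t < k`, kills the top `k` coefficients of `h` one at a time. -/

/-- The evaluation (encoding) map of a generalized Reed–Solomon code: it sends a polynomial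
of degree `< k` to the vector of its scaled evaluations at the points `α i`. -/
noncomputable def GRSmap (A : Type*) [CommRing A] {N : ℕ} (k : ℕ) (α v : Fin N → A) :
    Polynomial.degreeLT A k →ₗ[A] (Fin N → A) where
  toFun f i := v i * Polynomial.eval (α i) (f : Polynomial A)
  map_add' f g := by funext i; simp [mul_add]
  map_smul' c f := by funext i; simp [Polynomial.eval_smul]; ring

/-- The dual code of a linear code `C ⊆ A^N` with respect to the standard Euclidean inner
product. -/
def dualCode (A : Type*) [CommRing A] {N : ℕ} (C : Submodule A (Fin N → A)) :
    Submodule A (Fin N → A) where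
  carrier := {x | ∀ c ∈ C, ∑ i, x i * c i = 0}
  add_mem' := by
    intro a b ha hb c hc
    simp only [Set.mem_setOf_eq] at *
    simp [add_mul, Finset.sum_add_distrib, ha c hc, hb c hc]
  zero_mem' := by intro c hc; simp
  smul_mem' := by
    intro r x hx c hc
    simp only [Set.mem_setOf_eq, Pi.smul_apply, smul_eq_mul, mul_assoc, ← Finset.mul_sum]
    simp [hx c hc]

open Polynomial Finset Lagrange

section DegreeLT

variable {R : Type*} [Semiring R] {p q : R[X]}

theorem mul_X_pow_mem_degreeLT {n : ℕ} (hp : p ∈ degreeLT R n) (k : ℕ) :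
    p * X ^ k ∈ degreeLT R (n + k) := by
  rw [mem_degreeLT, degree_lt_iff_coeff_zero] at hp ⊢
  intro s hs
  rw [coeff_mul_X_pow']
  split_ifs
  · exact hp _ (by omega)
  · rfl

theorem mem_degreeLT_of_coeff_eq_zero {n : ℕ} (hp : p ∈ degreeLT R (n + 1)) (hn : p.coeff n = 0) :
    p ∈ degreeLT R n := by
  rw [mem_degreeLT, degree_lt_iff_coeff_zero] at hp ⊢
  intro s hs
  rcases hs.eq_or_lt with rfl | hs
  · exact hn
  · exact hp s (by omega)

theorem mul_mem_degreeLT_sub_one {n k : ℕ} (hp : p ∈ degreeLT R (n - k)) (hq : q ∈ degreeLT R k) :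
    p * q ∈ degreeLT R (n - 1) := by
  rw [mem_degreeLT, degree_lt_iff_coeff_zero] at hp hq ⊢
  intro s hs
  rw [coeff_mul]
  refine sum_eq_zero fun x hx => ?_
  rw [HasAntidiagonal.mem_antidiagonal] at hx
  rcases lt_or_ge x.1 (n - k) with h | h
  · rw [hq x.2 (by omega), mul_zero]
  · rw [hp x.1 h, zero_mul]

end DegreeLT

section Interpolation

variable {A : Type*} [CommRing A] {ι : Type*} [Fintype ι] {α : ι → A}

theorem eq_zero_of_mem_degreeLT_of_eval_eq_zero [Nontrivial A]
    (hα : Pairwise fun i j => IsUnit (α i - α j)) {q : A[X]}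
    (hq : q ∈ degreeLT A (Fintype.card ι)) (h : ∀ i, q.eval (α i) = 0) : q = 0 := by
  have hdvd : nodal univ α ∣ q :=
    prod_dvd_of_coprime (fun i _ j _ hij => isCoprime_X_sub_C_of_isUnit_sub (hα hij))
      fun i _ => dvd_iff_isRoot.2 (h i)
  have hmonic : (nodal univ α).Monic := nodal_monic
  rw [← (modByMonic_eq_self_iff (p := q) hmonic).2 (by rwa [degree_nodal, ← mem_degreeLT])]
  exact (modByMonic_eq_zero_iff_dvd hmonic).2 hdvd

variable [DecidableEq ι]

noncomputable def nodeWeight (α : ι → A) (i : ι) : A :=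
  ∏ j ∈ univ.erase i, Ring.inverse (α i - α j)

theorem nodeWeight_mul_eval_nodal_erase (hα : Pairwise fun i j => IsUnit (α i - α j)) (i : ι) :
    nodeWeight α i * (nodal (univ.erase i) α).eval (α i) = 1 := by
  rw [eval_nodal, nodeWeight, ← prod_mul_distrib]
  exact prod_eq_one fun j hj => Ring.inverse_mul_cancel _ (hα (ne_of_mem_erase hj).symm)

theorem eval_sum_C_mul_nodal_erase (c : ι → A) (t : ι) :
    (∑ i, C (c i) * nodal (univ.erase i) α).eval (α t) =
      c t * (nodal (univ.erase t) α).eval (α t) := by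
  rw [eval_finsetSum, sum_eq_single t]
  · rw [eval_mul, eval_C]
  · intro i _ hit
    rw [eval_mul, eval_nodal_at_node (mem_erase.2 ⟨Ne.symm hit, mem_univ t⟩), mul_zero]
  · exact fun ht => absurd (mem_univ t) ht

variable [Nontrivial A]

theorem sum_C_mul_nodal_erase_mem_degreeLT (c : ι → A) :
    ∑ i, C (c i) * nodal (univ.erase i) α ∈ degreeLT A (Fintype.card ι) := by
  refine Submodule.sum_mem _ fun i _ => ?_
  have hcard : 0 < Fintype.card ι := Fintype.card_pos_iff.2 ⟨i⟩
  rw [← smul_eq_C_mul, mem_degreeLT]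
  refine (degree_smul_le _ _).trans_lt ?_
  rw [degree_nodal, card_erase_of_mem (mem_univ i), card_univ]
  exact_mod_cast Nat.sub_lt hcard one_pos

theorem eq_sum_C_mul_nodal_erase (hα : Pairwise fun i j => IsUnit (α i - α j))
    {u : A[X]} (hu : u ∈ degreeLT A (Fintype.card ι)) :
    u = ∑ i, C (u.eval (α i) * nodeWeight α i) * nodal (univ.erase i) α := by
  refine sub_eq_zero.1 (eq_zero_of_mem_degreeLT_of_eval_eq_zero hα
    (sub_mem hu (sum_C_mul_nodal_erase_mem_degreeLT _)) fun t => ?_)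
  rw [eval_sub, eval_sum_C_mul_nodal_erase, mul_assoc, nodeWeight_mul_eval_nodal_erase hα,
    mul_one, sub_self]

theorem sum_nodeWeight_mul_eval (hα : Pairwise fun i j => IsUnit (α i - α j))
    {u : A[X]} (hu : u ∈ degreeLT A (Fintype.card ι)) :
    ∑ i, nodeWeight α i * u.eval (α i) = u.coeff (Fintype.card ι - 1) := by
  conv_rhs => rw [eq_sum_C_mul_nodal_erase hα hu]
  rw [finsetSum_coeff]
  refine sum_congr rfl fun i _ => ?_
  have hlead := (nodal_monic (s := univ.erase i) (v := α)).coeff_natDegree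
  rw [natDegree_nodal, card_erase_of_mem (mem_univ i), card_univ] at hlead
  rw [coeff_C_mul, hlead, mul_one, mul_comm]

theorem sum_nodeWeight_mul_eval_eq_zero (hα : Pairwise fun i j => IsUnit (α i - α j))
    {u : A[X]} (hu : u ∈ degreeLT A (Fintype.card ι - 1)) :
    ∑ i, nodeWeight α i * u.eval (α i) = 0 := by
  rw [sum_nodeWeight_mul_eval hα (degreeLT_mono (Nat.sub_le _ 1) hu)]
  exact coeff_eq_zero_of_degree_lt (mem_degreeLT.1 hu)

/-- Once `deg h < card ι - t`, the sum `∑ i, w i * (h * X ^ t) (α i)` is the coefficient of `h`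
of degree `card ι - 1 - t`. -/
theorem mem_degreeLT_card_sub_of_sum_nodeWeight_eq_zero
    (hα : Pairwise fun i j => IsUnit (α i - α j)) {h : A[X]}
    (hh : h ∈ degreeLT A (Fintype.card ι))
    {k : ℕ} (horth : ∀ t < k, ∑ i, nodeWeight α i * (h * X ^ t).eval (α i) = 0) :
    h ∈ degreeLT A (Fintype.card ι - k) := by
  induction k with
  | zero => simpa using hh
  | succ k ih =>
    have hk := ih fun t ht => horth t (ht.trans k.lt_succ_self)
    rcases le_or_gt (Fintype.card ι) k with hNk | hkN
    · rw [Nat.sub_eq_zero_of_le hNk] at hk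
      rw [Nat.sub_eq_zero_of_le (hNk.trans k.le_succ)]
      exact hk
    · have hcard : Fintype.card ι - k = Fintype.card ι - (k + 1) + 1 := by omega
      rw [hcard] at hk
      refine mem_degreeLT_of_coeff_eq_zero hk ?_
      have hmoment := sum_nodeWeight_mul_eval hα
        (by simpa [hcard.symm, Nat.sub_add_cancel hkN.le] using mul_X_pow_mem_degreeLT hk k)
      rwa [horth k k.lt_succ_self,
        show Fintype.card ι - 1 = Fintype.card ι - (k + 1) + k by omega, coeff_mul_X_pow,
        eq_comm] at hmoment

end Interpolation

section GeneralizedReedSolomon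

variable {A : Type*} [CommRing A] {N k : ℕ} {α v : Fin N → A}

noncomputable def dualMultiplier (α v : Fin N → A) (i : Fin N) : A :=
  Ring.inverse (v i) * nodeWeight α i

theorem GRSmap_apply (f : degreeLT A k) (i : Fin N) :
    GRSmap A k α v f i = v i * (f : A[X]).eval (α i) :=
  rfl

theorem sum_dualMultiplier_mul_eval_mul_mul_eval (hv : ∀ i, IsUnit (v i)) (g q : A[X]) :
    ∑ i, dualMultiplier α v i * g.eval (α i) * (v i * q.eval (α i)) =
      ∑ i, nodeWeight α i * (g * q).eval (α i) := by
  refine sum_congr rfl fun i _ => ?_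
  rw [eval_mul, dualMultiplier]
  linear_combination (nodeWeight α i * g.eval (α i) * q.eval (α i)) *
    Ring.inverse_mul_cancel _ (hv i)

variable [Nontrivial A] (hα : Pairwise fun i j => IsUnit (α i - α j)) (hv : ∀ i, IsUnit (v i))
include hα hv

theorem range_GRSmap_le_dualCode :
    LinearMap.range (GRSmap A (N - k) α (dualMultiplier α v)) ≤
      dualCode A (LinearMap.range (GRSmap A k α v)) := by
  rintro _ ⟨g, rfl⟩ _ ⟨q, rfl⟩
  change ∑ i, dualMultiplier α v i * (g : A[X]).eval (α i) * (v i * (q : A[X]).eval (α i)) = 0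
  rw [sum_dualMultiplier_mul_eval_mul_mul_eval hv]
  exact sum_nodeWeight_mul_eval_eq_zero hα (by simpa using mul_mem_degreeLT_sub_one g.2 q.2)

theorem dualCode_le_range_GRSmap :
    dualCode A (LinearMap.range (GRSmap A k α v)) ≤
      LinearMap.range (GRSmap A (N - k) α (dualMultiplier α v)) := by
  intro x hx
  set h : A[X] := ∑ i, C (x i * v i) * nodal (univ.erase i) α
  have hx_eq : ∀ i, dualMultiplier α v i * h.eval (α i) = x i := fun i => by
    rw [eval_sum_C_mul_nodal_erase, dualMultiplier]
    linear_combination (x i * Ring.inverse (v i) * v i) * nodeWeight_mul_eval_nodal_erase hα i +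
      x i * Ring.inverse_mul_cancel _ (hv i)
  have horth : ∀ t < k, ∑ i, nodeWeight α i * (h * X ^ t).eval (α i) = 0 := fun t ht => by
    have hXt : (X ^ t : A[X]) ∈ degreeLT A k := by
      rw [mem_degreeLT, degree_X_pow]
      exact_mod_cast ht
    rw [← sum_dualMultiplier_mul_eval_mul_mul_eval hv]
    simpa only [GRSmap_apply, hx_eq] using hx _ ⟨⟨X ^ t, hXt⟩, rfl⟩
  have hh := mem_degreeLT_card_sub_of_sum_nodeWeight_eq_zero hα
    (sum_C_mul_nodal_erase_mem_degreeLT _) horth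
  rw [Fintype.card_fin] at hh
  exact ⟨⟨h, hh⟩, funext hx_eq⟩

end GeneralizedReedSolomon

theorem dualCode_range_GRSmap {A : Type*} [CommRing A] {N : ℕ} (k : ℕ) {α v : Fin N → A}
    (hα : Pairwise fun i j => IsUnit (α i - α j)) (hv : ∀ i, IsUnit (v i)) :
    dualCode A (LinearMap.range (GRSmap A k α v)) =
      LinearMap.range (GRSmap A (N - k) α (dualMultiplier α v)) := by
  cases subsingleton_or_nontrivial A
  · exact Subsingleton.elim _ _
  · exact le_antisymm (dualCode_le_range_GRSmap hα hv) (range_GRSmap_le_dualCode hα hv)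

theorem GRS_dual_over_galois_ring_general (p n : ℕ) (f : Polynomial (ZMod (p ^ n))) (N k : ℕ)
    (α v : Fin N → AdjoinRoot f)
    (hα : ∀ i j, i ≠ j → IsUnit (α i - α j)) (hv : ∀ i, IsUnit (v i)) :
    dualCode (AdjoinRoot f) (LinearMap.range (GRSmap (AdjoinRoot f) k α v)) =
      LinearMap.range (GRSmap (AdjoinRoot f) (N - k) α
        (fun i => Ring.inverse (v i) *
          ∏ j ∈ Finset.univ.erase i, Ring.inverse (α i - α j))) :=
  dualCode_range_GRSmap k (fun i j => hα i j) hv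

/-- Over the Galois ring `S = GR(p^n, m)`, the Euclidean dual of the
generalized Reed–Solomon code `GRS_v(N, k)` is the generalized Reed–Solomon code
`GRS_{v'}(N, N - k)` with the same evaluation points and multipliers
`v' i = (v i)⁻¹ ∏_{j ≠ i} (α i - α j)⁻¹`. -/
theorem GRS_dual_over_galois_ring (p n m : ℕ) (hp : p.Prime) (hn : 0 < n) (hm : 0 < m)
    (f : Polynomial (ZMod (p ^ n))) (hf : f.Monic) (hdeg : f.natDegree = m)
    (hirr : Irreducible (f.map (ZMod.castHom (dvd_pow_self p hn.ne') (ZMod p))))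
    (N k : ℕ) (hk1 : 1 ≤ k) (hkN : k < N)
    (α v : Fin N → AdjoinRoot f)
    (hα : ∀ i j, i ≠ j → IsUnit (α i - α j)) (hv : ∀ i, IsUnit (v i)) :
    dualCode (AdjoinRoot f) (LinearMap.range (GRSmap (AdjoinRoot f) k α v)) =
      LinearMap.range (GRSmap (AdjoinRoot f) (N - k) α
        (fun i => Ring.inverse (v i) *
          ∏ j ∈ Finset.univ.erase i, Ring.inverse (α i - α j))) :=
  GRS_dual_over_galois_ring_general p n f N k α v hα hv
end

section
/- Let p be a prime, n, m, l ≥ 1, let R = GR(p^n,m) = (ZMod (p^n))[X]/(f) for a monic basic irreducible f of degree m, and let ρ ∈ R[X] be a monic polynomial of degree l whose image in (R/(p))[X] under reduction modulo the maximal ideal (p) is irreducible over the residue field R/(p). Set S = R[X]/(ρ). Then S is a local ring whose maximal ideal is generated by p, and its residue field S/(p) is a finite field with exactly p^{ml} elements (so S is the Galois ring GR(p^n, ml), realized as a Galois extension of R). -/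
open Polynomial

/-- Cardinality of `AdjoinRoot` of a monic polynomial over a commutative ring. -/
lemma card_adjoinRoot_monic {R : Type*} [CommRing R] {g : R[X]} (hg : g.Monic) :
    Nat.card (AdjoinRoot g) = Nat.card R ^ g.natDegree := by
  classical
  let b := AdjoinRoot.powerBasisAux' hg
  rw [Nat.card_congr b.equivFun.toEquiv, Nat.card_fun,
    Nat.card_eq_fintype_card (α := Fin g.natDegree), Fintype.card_fin]

/-- `(AdjoinRoot g) / (p) ≃ AdjoinRoot (g mod p)`. -/
noncomputable def quotPEquiv {R : Type*} [CommRing R] (g : R[X]) (p : ℕ) :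
    (AdjoinRoot g ⧸ Ideal.span {(p : AdjoinRoot g)}) ≃+*
      ((R ⧸ Ideal.span {(p : R)})[X] ⧸
        Ideal.span {g.map (Ideal.Quotient.mk (Ideal.span {(p : R)}))}) := by
  have h : (Ideal.span {(p : R)}).map (AdjoinRoot.of g) =
      Ideal.span {(p : AdjoinRoot g)} := by
    rw [Ideal.map_span, Set.image_singleton, map_natCast]
  exact (Ideal.quotEquivOfEq h.symm).trans
    (AdjoinRoot.quotAdjoinRootEquivQuotPolynomialQuot (Ideal.span {(p : R)}) g)

lemma ker_zmod_castHom (p n : ℕ) (hp : p.Prime) (hn : 0 < n) :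
    RingHom.ker (ZMod.castHom (dvd_pow_self p hn.ne') (ZMod p)) =
      Ideal.span {(p : ZMod (p ^ n))} := by
  haveI : NeZero (p ^ n) := ⟨pow_ne_zero n hp.pos.ne'⟩
  ext x
  rw [RingHom.mem_ker, Ideal.mem_span_singleton]
  constructor
  · intro h
    have hx : ((x.val : ℕ) : ZMod p) = 0 := by
      rwa [ZMod.natCast_val, ← ZMod.castHom_apply (h := dvd_pow_self p hn.ne')]
    obtain ⟨c, hc⟩ := (ZMod.natCast_eq_zero_iff _ _).mp hx
    refine ⟨(c : ZMod (p ^ n)), ?_⟩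
    have := congrArg (fun t : ℕ => (t : ZMod (p ^ n))) hc
    simpa [ZMod.natCast_val, ZMod.cast_id] using this
  · rintro ⟨c, rfl⟩
    have : (ZMod.castHom (dvd_pow_self p hn.ne') (ZMod p)) ((p : ZMod (p ^ n)) * c) = 0 := by
      rw [map_mul, map_natCast, ZMod.natCast_self, zero_mul]
    exact this

lemma isField_of_ringEquiv {A B : Type*} [Ring A] [Ring B] (e : A ≃+* B)
    (hB : IsField B) : IsField A := by
  obtain ⟨⟨x, y, hxy⟩, hcomm, hinv⟩ := hB
  refine ⟨⟨e.symm x, e.symm y, fun h => hxy (by simpa using congrArg e h)⟩,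
    fun a b => e.injective (by rw [map_mul, map_mul, hcomm]), fun {a} ha => ?_⟩
  obtain ⟨b, hb⟩ := hinv (a := e a) (fun h => ha (e.injective (by rw [h, map_zero])))
  exact ⟨e.symm b, e.injective (by rw [map_mul, map_one, e.apply_symm_apply, hb])⟩


/-- Let `R = GR(p^n, m)` and `ρ ∈ R[X]` a monic polynomial of degree `l`
whose reduction modulo the maximal ideal `(p)` is irreducible over the residue field
`R/(p)`. Then `S = R[X]/(ρ)` is a local ring whose maximal ideal is generated by `p` and
whose residue field `S/(p)` is a finite field with exactly `p^(m*l)` elements: `S` is the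
Galois ring `GR(p^n, m*l)` realized as a Galois extension of `R`. -/
theorem galois_ring_extension_local (p n m l : ℕ) (hp : p.Prime)
    (hn : 0 < n) (hm : 0 < m) (hl : 0 < l)
    (f : Polynomial (ZMod (p ^ n))) (hf : f.Monic) (hdeg : f.natDegree = m)
    (hirr : Irreducible (f.map (ZMod.castHom (dvd_pow_self p hn.ne') (ZMod p))))
    (ρ : Polynomial (AdjoinRoot f)) (hρ : ρ.Monic) (hρdeg : ρ.natDegree = l)
    (hρirr : Irreducible
      (ρ.map (Ideal.Quotient.mk (Ideal.span {(p : AdjoinRoot f)})))) :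
    ∃ _ : IsLocalRing (AdjoinRoot ρ),
      IsLocalRing.maximalIdeal (AdjoinRoot ρ) = Ideal.span {(p : AdjoinRoot ρ)} ∧
      IsField (AdjoinRoot ρ ⧸ Ideal.span {(p : AdjoinRoot ρ)}) ∧
      Nat.card (AdjoinRoot ρ ⧸ Ideal.span {(p : AdjoinRoot ρ)}) = p ^ (m * l) := by
  classical
  haveI : Fact p.Prime := ⟨hp⟩
  set R := AdjoinRoot f
  set S := AdjoinRoot ρ
  set k := R ⧸ Ideal.span {(p : R)}
  -- the residue ring of R is a field of cardinality p^m
  set f₀ := f.map (ZMod.castHom (dvd_pow_self p hn.ne') (ZMod p)) with hf₀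
  -- equivalence k ≃ AdjoinRoot f₀
  have hsurj : Function.Surjective (ZMod.castHom (dvd_pow_self p hn.ne') (ZMod p)) :=
    ZMod.ringHom_surjective _
  let e2 : (ZMod (p ^ n) ⧸ Ideal.span {(p : ZMod (p ^ n))}) ≃+* ZMod p :=
    (Ideal.quotEquivOfEq (ker_zmod_castHom p n hp hn).symm).trans
      (RingHom.quotientKerEquivOfSurjective hsurj)
  have he2 : ∀ x, e2 (Ideal.Quotient.mk _ x) =
      ZMod.castHom (dvd_pow_self p hn.ne') (ZMod p) x := fun x => rfl
  let mk0 := Ideal.Quotient.mk (Ideal.span {(p : ZMod (p ^ n))})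
  have hmapmap : (f.map mk0).map (e2 : _ →+* ZMod p) = f₀ := by
    rw [Polynomial.map_map]
    congr 1
  let e3 : ((ZMod (p ^ n) ⧸ Ideal.span {(p : ZMod (p ^ n))})[X] ⧸
      Ideal.span {f.map mk0}) ≃+* ((ZMod p)[X] ⧸ Ideal.span {f₀}) :=
    Ideal.quotientEquiv _ _ (Polynomial.mapEquiv e2) (by
      rw [Ideal.map_span, Set.image_singleton]
      exact congrArg (fun q => Ideal.span {q}) hmapmap.symm)
  let ek : k ≃+* ((ZMod p)[X] ⧸ Ideal.span {f₀}) := (quotPEquiv f p).trans e3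
  have hmaxf : (Ideal.span {f₀} : Ideal (ZMod p)[X]).IsMaximal :=
    PrincipalIdealRing.isMaximal_of_irreducible hirr
  have hkfield : IsField k := isField_of_ringEquiv ek
    ((Ideal.Quotient.maximal_ideal_iff_isField_quotient _).mp hmaxf)
  have hcardk : Nat.card k = p ^ m := by
    have hAf : Nat.card (AdjoinRoot f₀) = p ^ m := by
      rw [card_adjoinRoot_monic (hf.map _), hf.natDegree_map, hdeg, Nat.card_zmod]
    rw [Nat.card_congr ek.toEquiv]
    exact hAf
  -- residue ring of S
  set ρ' := ρ.map (Ideal.Quotient.mk (Ideal.span {(p : R)})) with hρ'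
  let eS : (S ⧸ Ideal.span {(p : S)}) ≃+* ((R ⧸ Ideal.span {(p : R)})[X] ⧸
      Ideal.span {ρ'}) := quotPEquiv ρ p
  have hSfield : IsField (S ⧸ Ideal.span {(p : S)}) := by
    letI : Field k := hkfield.toField
    have hmax : (Ideal.span {ρ'} : Ideal k[X]).IsMaximal :=
      PrincipalIdealRing.isMaximal_of_irreducible hρirr
    have h2 : IsField (k[X] ⧸ Ideal.span {ρ'}) :=
      (Ideal.Quotient.maximal_ideal_iff_isField_quotient _).mp hmax
    exact isField_of_ringEquiv eS h2
  haveI : Nontrivial k := ⟨hkfield.exists_pair_ne⟩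
  have hScard : Nat.card (S ⧸ Ideal.span {(p : S)}) = p ^ (m * l) := by
    have h1 : Nat.card (S ⧸ Ideal.span {(p : S)}) = Nat.card k ^ ρ'.natDegree := by
      rw [Nat.card_congr eS.toEquiv]
      exact card_adjoinRoot_monic (hρ.map _)
    rw [h1, hρ.natDegree_map, hρdeg, hcardk, ← pow_mul]
  -- p is nilpotent in S
  have hpnil : (p : S) ^ n = 0 := by
    have h0 : ((p ^ n : ℕ) : ZMod (p ^ n)) = 0 := by
      simp [ZMod.natCast_self]
    calc (p : S) ^ n = ((p ^ n : ℕ) : S) := by push_cast; ring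
    _ = algebraMap (ZMod (p ^ n)) S ((p ^ n : ℕ) : ZMod (p ^ n)) := by
        rw [map_natCast]
    _ = 0 := by rw [h0, map_zero]
  -- local ring structure
  have hmaxS : (Ideal.span {(p : S)}).IsMaximal :=
    Ideal.Quotient.maximal_of_isField _ hSfield
  have huniq : ∃! I : Ideal S, I.IsMaximal := by
    refine ⟨Ideal.span {(p : S)}, hmaxS, fun J hJ => ?_⟩
    haveI := hJ
    have hpJ : (p : S) ∈ J := hJ.isPrime.mem_of_pow_mem n (by
      rw [hpnil]; exact J.zero_mem)
    have hle : Ideal.span {(p : S)} ≤ J := Ideal.span_le.mpr (by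
      simpa using hpJ)
    exact (hmaxS.eq_of_le hJ.ne_top hle).symm
  haveI hloc : IsLocalRing S := IsLocalRing.of_unique_max_ideal huniq
  exact ⟨hloc, (IsLocalRing.eq_maximalIdeal hmaxS).symm, hSfield, hScard⟩
end
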